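/- arXiv:2512.18937 — 4 statements merged into one kernel-verified Lean document; each statement's English description precedes it below -/
import Mathlib

section
/- Define ρ_L^* := min{ρ ≥ 0 : cos(√ρ L/2) − √ρ sin(√ρ L/2) = 0} for L > 0. Then ρ_L^* · L² → π² as L → ∞. -/
open Filter Real

noncomputable section

/-- `ρ_L^*`: the smallest `ρ ≥ 0` such that `cos(√ρ·L/2) − √ρ·sin(√ρ·L/2) = 0`. -/
def rhoStar (L : ℝ) : ℝ :=
  sInf {ρ : ℝ | 0 ≤ ρ ∧
    Real.cos (Real.sqrt ρ * L / 2) - Real.sqrt ρ * Real.sin (Real.sqrt ρ * L / 2) = 0}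

/-!
With `x = √ρ·L/2` the equation reads `cos x = (2x/L)·sin x`. At `ρ = (π/L)²`, i.e. `x = π/2`,
the left side minus the right is `-π/L < 0`, so the intermediate value theorem gives
`ρ_L^* L² ≤ π²`. Conversely any root has `cos x ≤ 2x/L`, and either `x ≥ π/2` or
`cos x < π/L`; both force `x ≥ arccos(π/L)`, so `ρ_L^* L² ≥ (2 arccos(π/L))² → π²`.
-/

/-- `rhoStar L` is definitionally `sInf (rhoStarZeros L)`. -/
def rhoStarZeros (L : ℝ) : Set ℝ :=
  {ρ : ℝ | 0 ≤ ρ ∧ cos (√ρ * L / 2) - √ρ * sin (√ρ * L / 2) = 0}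

lemma exists_mem_rhoStarZeros_le {L : ℝ} (hL : 0 < L) :
    ∃ ρ ∈ rhoStarZeros L, ρ ≤ (π / L) ^ 2 := by
  set g : ℝ → ℝ := fun ρ => cos (√ρ * L / 2) - √ρ * sin (√ρ * L / 2)
  have hsqrt : √((π / L) ^ 2) = π / L := sqrt_sq (by positivity)
  have hg_end : g ((π / L) ^ 2) = -(π / L) := by
    have hx : π / L * L / 2 = π / 2 := by field_simp
    simp only [g, hsqrt, hx, cos_pi_div_two, sin_pi_div_two]
    ring
  have hzero_mem : (0 : ℝ) ∈ Set.Icc (g ((π / L) ^ 2)) (g 0) := by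
    rw [hg_end]
    exact ⟨neg_nonpos.mpr (by positivity), by simp [g]⟩
  obtain ⟨ρ, ⟨hρ0, hρle⟩, hgρ⟩ :=
    intermediate_value_Icc' (sq_nonneg _) (by fun_prop : Continuous g).continuousOn hzero_mem
  exact ⟨ρ, ⟨hρ0, hgρ⟩, hρle⟩

lemma arccos_pi_div_le_of_cos_le {L x : ℝ} (hL : 0 < L) (hx : 0 ≤ x)
    (hcos : cos x ≤ 2 * x / L) : arccos (π / L) ≤ x := by
  rcases le_or_gt (π / 2) x with hx_large | hx_small
  · exact (arccos_le_pi_div_two.mpr (by positivity)).trans hx_large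
  · have hcos_le : cos x ≤ π / L := hcos.trans (by gcongr; linarith)
    calc arccos (π / L) ≤ arccos (cos x) := arccos_le_arccos hcos_le
      _ = x := arccos_cos hx (by linarith [pi_pos])

lemma two_mul_arccos_pi_div_le {L ρ : ℝ} (hL : 0 < L) (hρ : ρ ∈ rhoStarZeros L) :
    2 * arccos (π / L) ≤ √ρ * L := by
  obtain ⟨-, heq⟩ := hρ
  have hcos : cos (√ρ * L / 2) ≤ 2 * (√ρ * L / 2) / L := by
    have hsqrt : 2 * (√ρ * L / 2) / L = √ρ := by field_simp
    rw [hsqrt]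
    calc cos (√ρ * L / 2) = √ρ * sin (√ρ * L / 2) := by linarith
      _ ≤ √ρ * 1 := by gcongr; exact sin_le_one _
      _ = √ρ := mul_one _
  linarith [arccos_pi_div_le_of_cos_le hL (by positivity) hcos]

lemma rhoStar_mul_sq_le_pi_sq {L : ℝ} (hL : 0 < L) : rhoStar L * L ^ 2 ≤ π ^ 2 := by
  obtain ⟨ρ, hρ, hρle⟩ := exists_mem_rhoStarZeros_le hL
  have hbdd : BddBelow (rhoStarZeros L) := ⟨0, fun _ h => h.1⟩
  have hle : rhoStar L ≤ (π / L) ^ 2 := (csInf_le hbdd hρ).trans hρle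
  calc rhoStar L * L ^ 2 ≤ (π / L) ^ 2 * L ^ 2 := by gcongr
    _ = π ^ 2 := by field_simp

lemma sq_two_mul_arccos_pi_div_le_rhoStar_mul_sq {L : ℝ} (hL : 0 < L) :
    (2 * arccos (π / L)) ^ 2 ≤ rhoStar L * L ^ 2 := by
  obtain ⟨ρ₀, hρ₀, -⟩ := exists_mem_rhoStarZeros_le hL
  have hlower : ∀ ρ ∈ rhoStarZeros L, (2 * arccos (π / L) / L) ^ 2 ≤ ρ := by
    intro ρ hρ
    have h := two_mul_arccos_pi_div_le hL hρ
    calc (2 * arccos (π / L) / L) ^ 2 ≤ (√ρ * L / L) ^ 2 := by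
          have := arccos_nonneg (π / L)
          gcongr
      _ = ρ := by rw [mul_div_cancel_right₀ _ hL.ne', sq_sqrt hρ.1]
  have hle : (2 * arccos (π / L) / L) ^ 2 ≤ rhoStar L := le_csInf ⟨ρ₀, hρ₀⟩ hlower
  calc (2 * arccos (π / L)) ^ 2 = (2 * arccos (π / L) / L) ^ 2 * L ^ 2 := by field_simp
    _ ≤ rhoStar L * L ^ 2 := by gcongr

lemma tendsto_sq_two_mul_arccos_pi_div :
    Tendsto (fun L : ℝ => (2 * arccos (π / L)) ^ 2) atTop (nhds (π ^ 2)) := by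
  have hdiv : Tendsto (fun L : ℝ => π / L) atTop (nhds 0) :=
    tendsto_const_nhds.div_atTop tendsto_id
  have harccos := (continuous_arccos.tendsto 0).comp hdiv
  simp only [Function.comp_def, arccos_zero] at harccos
  convert (harccos.const_mul 2).pow 2 using 2
  ring

/-- `ρ_L^* · L² → π²` as `L → ∞`. -/
theorem rhoStar_mul_sq_tendsto_pi_sq :
    Tendsto (fun L : ℝ => rhoStar L * L ^ 2) atTop (nhds (Real.pi ^ 2)) := by
  refine tendsto_of_tendsto_of_tendsto_of_le_of_le' tendsto_sq_two_mul_arccos_pi_div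
    tendsto_const_nhds ?_ ?_
  · filter_upwards [eventually_gt_atTop 0] with L hL
    exact sq_two_mul_arccos_pi_div_le_rhoStar_mul_sq hL
  · filter_upwards [eventually_gt_atTop 0] with L hL
    exact rhoStar_mul_sq_le_pi_sq hL
end
end

section
/- For every γ ∈ [0, 1) and all real numbers x, y with 1 ≤ x ≤ y: x^γ · y^{1−γ} − (x − 1/2)^γ · (y − 1/2)^{1−γ} ≥ 1/2. -/
open Real

/-- for `γ ∈ [0,1)` and `1 ≤ x ≤ y`,
`x^γ y^{1−γ} − (x − 1/2)^γ (y − 1/2)^{1−γ} ≥ 1/2`. -/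
theorem rpow_diff_ge_half (γ : ℝ) (hγ : γ ∈ Set.Ico (0 : ℝ) 1)
    (x y : ℝ) (hx : 1 ≤ x) (hxy : x ≤ y) :
    1 / 2 ≤ x ^ γ * y ^ (1 - γ) - (x - 1 / 2) ^ γ * (y - 1 / 2) ^ (1 - γ) := by
  obtain ⟨hγ0, hγ1⟩ := hγ
  have hx0 : (0:ℝ) < x := by linarith
  have hy1 : (1:ℝ) ≤ y := le_trans hx hxy
  have hy0 : (0:ℝ) < y := by linarith
  have ha : (0:ℝ) ≤ (x - 1/2) / x := div_nonneg (by linarith) hx0.le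
  have hb : (0:ℝ) ≤ (y - 1/2) / y := div_nonneg (by linarith) hy0.le
  have hw : γ + (1 - γ) = 1 := by ring
  have h1 : ((x - 1/2)/x) ^ γ * ((y - 1/2)/y) ^ (1 - γ)
      ≤ γ * ((x - 1/2)/x) + (1 - γ) * ((y - 1/2)/y) :=
    Real.geom_mean_le_arith_mean2_weighted hγ0 (by linarith) ha hb hw
  have hxg : (0:ℝ) < x ^ γ := Real.rpow_pos_of_pos hx0 γ
  have hyg : (0:ℝ) < y ^ (1 - γ) := Real.rpow_pos_of_pos hy0 _
  have hdiv1 : ((x - 1/2)/x) ^ γ = (x - 1/2) ^ γ / x ^ γ :=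
    Real.div_rpow (by linarith : (0:ℝ) ≤ x - 1/2) hx0.le γ
  have hdiv2 : ((y - 1/2)/y) ^ (1 - γ) = (y - 1/2) ^ (1 - γ) / y ^ (1 - γ) :=
    Real.div_rpow (by linarith : (0:ℝ) ≤ y - 1/2) hy0.le (1 - γ)
  -- multiply h1 by x^γ * y^(1-γ)
  have h2 : (x - 1/2) ^ γ * (y - 1/2) ^ (1 - γ)
      ≤ x ^ γ * y ^ (1 - γ) * (γ * ((x - 1/2)/x) + (1 - γ) * ((y - 1/2)/y)) := by
    have := mul_le_mul_of_nonneg_left h1 (le_of_lt (mul_pos hxg hyg))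
    calc (x - 1/2) ^ γ * (y - 1/2) ^ (1 - γ)
        = x ^ γ * y ^ (1 - γ) * (((x - 1/2)/x) ^ γ * ((y - 1/2)/y) ^ (1 - γ)) := by
          rw [hdiv1, hdiv2]; field_simp
      _ ≤ _ := this
  -- second AM-GM
  set P := (y/x) ^ (1 - γ) with hP
  set Q := (x/y) ^ γ with hQ
  have ht1 : (0:ℝ) ≤ P := le_of_lt (Real.rpow_pos_of_pos (by positivity) _)
  have ht2 : (0:ℝ) ≤ Q := le_of_lt (Real.rpow_pos_of_pos (by positivity) _)
  have h3 : P ^ γ * Q ^ (1 - γ) ≤ γ * P + (1 - γ) * Q :=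
    Real.geom_mean_le_arith_mean2_weighted hγ0 (by linarith) ht1 ht2 hw
  have hgm : P ^ γ * Q ^ (1 - γ) = 1 := by
    rw [hP, hQ, ← Real.rpow_mul (by positivity), ← Real.rpow_mul (by positivity),
      show x/y = (y/x)⁻¹ by field_simp,
      Real.inv_rpow (by positivity), ← Real.rpow_neg (by positivity),
      ← Real.rpow_add (by positivity),
      show (1-γ)*γ + -(γ*(1-γ)) = 0 by ring, Real.rpow_zero]
  have hPQ : (1:ℝ) ≤ γ * P + (1 - γ) * Q := hgm.symm.le.trans h3
  -- identities
  have hxx : x ^ γ * x ^ (1-γ) = x := by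
    rw [← Real.rpow_add hx0]; norm_num
  have hyy : y ^ γ * y ^ (1-γ) = y := by
    rw [← Real.rpow_add hy0]; norm_num
  have hx1g : (0:ℝ) < x ^ (1-γ) := Real.rpow_pos_of_pos hx0 _
  have hyγ : (0:ℝ) < y ^ γ := Real.rpow_pos_of_pos hy0 _
  have e1 : P * x = x ^ γ * y ^ (1 - γ) := by
    rw [hP, Real.div_rpow hy0.le hx0.le, div_mul_eq_mul_div, div_eq_iff hx1g.ne']
    calc y ^ (1-γ) * x = y ^ (1-γ) * (x ^ γ * x ^ (1-γ)) := by rw [hxx]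
      _ = x ^ γ * y ^ (1-γ) * x ^ (1-γ) := by ring
  have e2 : Q * y = x ^ γ * y ^ (1 - γ) := by
    rw [hQ, Real.div_rpow hx0.le hy0.le, div_mul_eq_mul_div, div_eq_iff hyγ.ne']
    calc x ^ γ * y = x ^ γ * (y ^ γ * y ^ (1-γ)) := by rw [hyy]
      _ = x ^ γ * y ^ (1-γ) * y ^ γ := by ring
  have e1' : x ^ γ * y ^ (1 - γ) / x = P := by
    rw [← e1, mul_div_assoc, div_self hx0.ne', mul_one]
  have e2' : x ^ γ * y ^ (1 - γ) / y = Q := by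
    rw [← e2, mul_div_assoc, div_self hy0.ne', mul_one]
  have eq : x ^ γ * y ^ (1 - γ)
      - x ^ γ * y ^ (1 - γ) * (γ * ((x - 1/2)/x) + (1 - γ) * ((y - 1/2)/y))
      = γ/2 * P + (1-γ)/2 * Q := by
    rw [← e1', ← e2']
    field_simp
    ring
  calc (1:ℝ)/2 ≤ γ/2 * P + (1-γ)/2 * Q := by linarith
    _ = x ^ γ * y ^ (1 - γ)
        - x ^ γ * y ^ (1 - γ) * (γ * ((x - 1/2)/x) + (1 - γ) * ((y - 1/2)/y)) := eq.symm
    _ ≤ x ^ γ * y ^ (1 - γ) - (x - 1/2) ^ γ * (y - 1/2) ^ (1 - γ) := by linarith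
end

section
/- For every γ ∈ [0, 1), every β ∈ (0, 1/2], and all natural numbers i, j with 1 ≤ i < j: 1 − exp( −β (i − 1/2)^{−γ} (j − 1/2)^{γ−1} ) ≥ β · i^{−γ} · j^{γ−1}. -/
open Real

lemma exp_neg_le_quad {x : ℝ} (hx : 0 ≤ x) : Real.exp (-x) ≤ 1 - x + x ^ 2 / 2 := by
  have h := Real.quadratic_le_exp_of_nonneg hx
  have hpos : (0:ℝ) < 1 + x + x ^ 2 / 2 := by positivity
  rw [Real.exp_neg]
  rw [inv_le_iff_one_le_mul₀ (lt_of_lt_of_le hpos h)]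
  nlinarith [Real.exp_pos x, sq_nonneg (x^2)]

set_option maxHeartbeats 1000000 in
/-- for `γ ∈ [0,1)`, `β ∈ (0,1/2]` and naturals `1 ≤ i < j`,
`1 − exp(−β (i − 1/2)^{−γ} (j − 1/2)^{γ−1}) ≥ β i^{−γ} j^{γ−1}`. -/
theorem one_sub_exp_ge (γ β : ℝ) (hγ : γ ∈ Set.Ico (0 : ℝ) 1)
    (hβ : β ∈ Set.Ioc (0 : ℝ) (1 / 2)) (i j : ℕ) (hi : 1 ≤ i) (hij : i < j) :
    β * (i : ℝ) ^ (-γ) * (j : ℝ) ^ (γ - 1) ≤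
      1 - Real.exp (-(β * ((i : ℝ) - 1 / 2) ^ (-γ) * ((j : ℝ) - 1 / 2) ^ (γ - 1))) := by
  obtain ⟨hγ0, hγ1⟩ := hγ
  obtain ⟨hβ0, hβ2⟩ := hβ
  have hj2 : 2 ≤ j := by omega
  have hu : (1:ℝ) ≤ (i:ℝ) := by exact_mod_cast hi
  have hv : (2:ℝ) ≤ (j:ℝ) := by exact_mod_cast hj2
  set u : ℝ := (i:ℝ) with hudef
  set v : ℝ := (j:ℝ) with hvdef
  clear_value u v
  have hup : (0:ℝ) < u := by linarith
  have hvp : (0:ℝ) < v := by linarith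
  set p : ℝ := u - 1/2 with hpdef
  set q : ℝ := v - 1/2 with hqdef
  clear_value p q
  have hp : (0:ℝ) < p := by rw [hpdef]; linarith
  have hq : (0:ℝ) < q := by rw [hqdef]; linarith
  set a : ℝ := p⁻¹ with hadef
  set b : ℝ := q⁻¹ with hbdef
  clear_value a b
  have ha0 : 0 ≤ a := by rw [hadef]; positivity
  have hb0 : 0 ≤ b := by rw [hbdef]; positivity
  have hg1' : (0:ℝ) ≤ 1 - γ := by linarith
  -- rewrite powers
  have hpa : p ^ (-γ) = a ^ γ := by
    rw [hadef, Real.inv_rpow hp.le, ← Real.rpow_neg hp.le]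
  have hqb : q ^ (γ - 1) = b ^ (1 - γ) := by
    rw [hbdef, Real.inv_rpow hq.le, ← Real.rpow_neg hq.le, neg_sub]
  have hs : u⁻¹ = a * (p / u) := by
    rw [hadef, ← mul_div_assoc, inv_mul_cancel₀ hp.ne', one_div]
  have ht : v⁻¹ = b * (q / v) := by
    rw [hbdef, ← mul_div_assoc, inv_mul_cancel₀ hq.ne', one_div]
  have hsp : (0:ℝ) ≤ p / u := by positivity
  have htp : (0:ℝ) ≤ q / v := by positivity
  have hua : u ^ (-γ) = a ^ γ * (p / u) ^ γ := by
    rw [Real.rpow_neg hup.le, ← Real.inv_rpow hup.le, hs, Real.mul_rpow ha0 hsp]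
  have hvb : v ^ (γ - 1) = b ^ (1 - γ) * (q / v) ^ (1 - γ) := by
    rw [show γ - 1 = -(1 - γ) by ring, Real.rpow_neg hvp.le, ← Real.inv_rpow hvp.le, ht,
      Real.mul_rpow hb0 htp]
  set x : ℝ := β * p ^ (-γ) * q ^ (γ - 1) with hxdef
  have hx0 : 0 ≤ x := by
    rw [hxdef]
    positivity
  clear_value x
  -- AM-GM for a, b
  have hab : a ^ γ * b ^ (1 - γ) ≤ γ * a + (1 - γ) * b :=
    Real.geom_mean_le_arith_mean2_weighted hγ0 hg1' ha0 hb0 (by ring)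
  have hau : a ≤ 2 / u := by
    rw [hadef, hpdef, inv_eq_one_div, div_le_div_iff₀ (by linarith) hup]
    nlinarith
  have hbv : b ≤ 2 / v := by
    rw [hbdef, hqdef, inv_eq_one_div, div_le_div_iff₀ (by linarith) hvp]
    nlinarith
  -- bound on x
  have hx_le : x ≤ γ / u + (1 - γ) / v := by
    have h1 : x = β * (a ^ γ * b ^ (1 - γ)) := by rw [hxdef, hpa, hqb]; ring
    have h2 : x ≤ β * (γ * a + (1 - γ) * b) := by
      rw [h1]; exact mul_le_mul_of_nonneg_left hab hβ0.le
    have h3 : β * (γ * a + (1 - γ) * b) ≤ (1/2) * (γ * (2/u) + (1 - γ) * (2/v)) := by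
      apply mul_le_mul hβ2 _ _ (by norm_num)
      · have e1 : γ * a ≤ γ * (2/u) := mul_le_mul_of_nonneg_left hau hγ0
        have e2 : (1 - γ) * b ≤ (1 - γ) * (2/v) := mul_le_mul_of_nonneg_left hbv hg1'
        linarith
      · have := mul_nonneg hγ0 ha0
        have := mul_nonneg hg1' hb0
        linarith
    calc x ≤ (1/2) * (γ * (2/u) + (1 - γ) * (2/v)) := h2.trans h3
    _ = γ / u + (1 - γ) / v := by ring
  -- AM-GM for s = p/u, t = q/v
  have hst : (p/u) ^ γ * (q/v) ^ (1 - γ) ≤ γ * (p/u) + (1 - γ) * (q/v) :=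
    Real.geom_mean_le_arith_mean2_weighted hγ0 hg1' hsp htp (by ring)
  have hst_le : γ * (p/u) + (1 - γ) * (q/v) ≤ 1 - x / 2 := by
    have h2u : (2:ℝ) * u ≠ 0 := by positivity
    have h2v : (2:ℝ) * v ≠ 0 := by positivity
    have e1 : p/u = 1 - 1/(2*u) := by
      rw [hpdef, eq_sub_iff_add_eq, div_add_div _ _ hup.ne' h2u,
        div_eq_one_iff_eq (mul_ne_zero hup.ne' h2u)]
      ring
    have e2 : q/v = 1 - 1/(2*v) := by
      rw [hqdef, eq_sub_iff_add_eq, div_add_div _ _ hvp.ne' h2v,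
        div_eq_one_iff_eq (mul_ne_zero hvp.ne' h2v)]
      ring
    have e4 : γ / u = γ * (1/u) := by ring
    have e5 : (1 - γ) / v = (1 - γ) * (1/v) := by ring
    have e6 : 1/(2*u) = (1/u)/2 := by rw [one_div, mul_inv, one_div]; ring
    have e7 : 1/(2*v) = (1/v)/2 := by rw [one_div, mul_inv, one_div]; ring
    have e3 : γ * (1 - 1/(2*u)) + (1 - γ) * (1 - 1/(2*v))
        = 1 - (γ / u + (1 - γ) / v) / 2 := by
      rw [e4, e5, e6, e7]; ring
    rw [e1, e2, e3]
    linarith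
  -- LHS ≤ x * (1 - x/2)
  have hL : β * u ^ (-γ) * v ^ (γ - 1) ≤ x * (1 - x / 2) := by
    have h1 : β * u ^ (-γ) * v ^ (γ - 1) = x * ((p/u) ^ γ * (q/v) ^ (1 - γ)) := by
      rw [hua, hvb, hxdef, hpa, hqb]; ring
    rw [h1]
    calc x * ((p/u) ^ γ * (q/v) ^ (1 - γ)) ≤ x * (γ * (p/u) + (1 - γ) * (q/v)) :=
          mul_le_mul_of_nonneg_left hst hx0
    _ ≤ x * (1 - x / 2) := mul_le_mul_of_nonneg_left hst_le hx0
  -- exp bound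
  have hexp : Real.exp (-x) ≤ 1 - x + x ^ 2 / 2 := exp_neg_le_quad hx0
  have hfin : x * (1 - x / 2) ≤ 1 - Real.exp (-x) := by nlinarith
  exact hL.trans hfin
end

section
/- For every ω > 0, every r ∈ (0, ω²), and every s ∈ [0, 2π/ω]: (ω²/r)·(cos(√r · s) − 1) + 1 − cos(ω s) ≤ 0. -/
open Real

lemma sin_concave_scale (t lam : ℝ) (ht0 : 0 ≤ t) (htpi : t ≤ Real.pi)
    (hl0 : 0 ≤ lam) (hl1 : lam ≤ 1) :
    lam * Real.sin t ≤ Real.sin (lam * t) := by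
  have h := strictConcaveOn_sin_Icc.concaveOn.2
    (Set.mem_Icc.mpr ⟨le_refl (0:ℝ), Real.pi_pos.le⟩)
    (Set.mem_Icc.mpr ⟨ht0, htpi⟩)
    (by linarith : (0:ℝ) ≤ 1 - lam) hl0 (by ring)
  simpa using h

lemma cos_half_identity (x : ℝ) : Real.cos x = 1 - 2 * Real.sin (x / 2) ^ 2 := by
  have h := Real.cos_two_mul (x / 2)
  have h2 := Real.sin_sq_add_cos_sq (x / 2)
  have : 2 * (x / 2) = x := by ring
  rw [this] at h
  nlinarith

/-- for `ω > 0`, `r ∈ (0, ω²)` and `s ∈ [0, 2π/ω]`,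
`(ω²/r)(cos(√r s) − 1) + 1 − cos(ω s) ≤ 0`. -/
theorem cos_combination_nonpos (ω r s : ℝ) (hω : 0 < ω)
    (hr : r ∈ Set.Ioo 0 (ω ^ 2)) (hs : s ∈ Set.Icc 0 (2 * Real.pi / ω)) :
    ω ^ 2 / r * (Real.cos (Real.sqrt r * s) - 1) + 1 - Real.cos (ω * s) ≤ 0 := by
  obtain ⟨hr0, hrω⟩ := hr
  obtain ⟨hs0, hs2⟩ := hs
  have hωs : ω * s ≤ 2 * Real.pi := by
    rw [le_div_iff₀ hω] at hs2; nlinarith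
  set t := ω * s / 2 with ht
  have ht0 : 0 ≤ t := by positivity
  have htpi : t ≤ Real.pi := by rw [ht]; linarith
  have hsqrt : Real.sqrt r ≤ ω := by
    have : Real.sqrt r < Real.sqrt (ω ^ 2) := Real.sqrt_lt_sqrt hr0.le hrω
    rw [Real.sqrt_sq hω.le] at this; exact this.le
  have hsqrt0 : 0 ≤ Real.sqrt r := Real.sqrt_nonneg r
  set lam := Real.sqrt r / ω with hlam
  have hl0 : 0 ≤ lam := by positivity
  have hl1 : lam ≤ 1 := by rw [hlam, div_le_one hω]; exact hsqrt
  have key := sin_concave_scale t lam ht0 htpi hl0 hl1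
  have heq : lam * t = Real.sqrt r * s / 2 := by
    rw [hlam, ht]; field_simp
  rw [heq] at key
  have hsin0 : 0 ≤ Real.sin t := Real.sin_nonneg_of_nonneg_of_le_pi ht0 htpi
  have hsq : (lam * Real.sin t) ^ 2 ≤ Real.sin (Real.sqrt r * s / 2) ^ 2 := by
    have h0 : 0 ≤ lam * Real.sin t := mul_nonneg hl0 hsin0
    nlinarith
  have hlamsq : lam ^ 2 = r / ω ^ 2 := by
    rw [hlam, div_pow, Real.sq_sqrt hr0.le]
  have hc1 : Real.cos (Real.sqrt r * s) = 1 - 2 * Real.sin (Real.sqrt r * s / 2) ^ 2 :=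
    cos_half_identity _
  have hc2 : Real.cos (ω * s) = 1 - 2 * Real.sin t ^ 2 := by
    rw [cos_half_identity (ω * s)]
  rw [hc1, hc2]
  have hω2 : (0:ℝ) < ω ^ 2 := by positivity
  have h2 : r / ω ^ 2 * Real.sin t ^ 2 ≤ Real.sin (Real.sqrt r * s / 2) ^ 2 := by
    have e : (lam * Real.sin t) ^ 2 = r / ω ^ 2 * Real.sin t ^ 2 := by
      rw [mul_pow, hlamsq]
    rw [e] at hsq; exact hsq
  have : ω ^ 2 / r * (r / ω ^ 2 * Real.sin t ^ 2) ≤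
      ω ^ 2 / r * Real.sin (Real.sqrt r * s / 2) ^ 2 := by
    apply mul_le_mul_of_nonneg_left h2 (by positivity)
  have hcancel : ω ^ 2 / r * (r / ω ^ 2 * Real.sin t ^ 2) = Real.sin t ^ 2 := by
    field_simp
  nlinarith [this]
end
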